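/- (No-cloning theorem) If the Hilbert space H has dimension at least 2, there is no unitary operator U on H ⊗ H such that U(ψ ⊗ φ₀) = ψ ⊗ ψ for all unit vectors ψ ∈ H, where φ₀ is a fixed unit vector. -/

import Mathlib

/-!
A unitary preserves inner products, and `⟪x ⊗ φ₀, y ⊗ φ₀⟫ = ⟪x, y⟫` while `⟪x ⊗ x, y ⊗ y⟫ = ⟪x, y⟫²`.
So a cloner forces `⟪x, y⟫ = ⟪x, y⟫²`, i.e. `⟪x, y⟫ ∈ {0, 1}`, for all unit vectors `x`, `y`.
In dimension at least two there are unit vectors with `⟪x, y⟫ = 3 / 5`.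
-/

open Matrix

section DotProduct

variable {R : Type*} [CommRing R] [StarRing R]

theorem star_mulVec_dotProduct_mulVec_of_mem_unitaryGroup {m : Type*} [Fintype m]
    [DecidableEq m] {U : Matrix m m R} (hU : U ∈ unitaryGroup m R) (x y : m → R) :
    star (U *ᵥ x) ⬝ᵥ (U *ᵥ y) = star x ⬝ᵥ y := by
  rw [star_mulVec, dotProduct_mulVec, vecMul_vecMul, ← star_eq_conjTranspose,
    mem_unitaryGroup_iff'.mp hU, vecMul_one]

theorem star_prod_dotProduct_prod {ι κ : Type*} [Fintype ι] [Fintype κ]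
    (a c : ι → R) (b d : κ → R) :
    star (fun p : ι × κ => a p.1 * b p.2) ⬝ᵥ (fun p => c p.1 * d p.2)
      = (star a ⬝ᵥ c) * (star b ⬝ᵥ d) := by
  simp only [dotProduct, Pi.star_apply, star_mul', Fintype.sum_prod_type, Finset.sum_mul_sum]
  exact Finset.sum_congr rfl fun i _ => Finset.sum_congr rfl fun j _ => by ring

end DotProduct

variable {𝕜 : Type*} [RCLike 𝕜]

theorem EuclideanSpace.star_dotProduct {ι : Type*} [Fintype ι] (x y : EuclideanSpace 𝕜 ι) :
    star (x : ι → 𝕜) ⬝ᵥ y = inner 𝕜 x y := by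
  rw [EuclideanSpace.inner_eq_star_dotProduct, dotProduct_comm]

theorem inner_sq_eq_inner_of_mulVec_clone {ι : Type*} [Fintype ι] [DecidableEq ι]
    {U : Matrix (ι × ι) (ι × ι) 𝕜} (hU : U ∈ unitaryGroup (ι × ι) 𝕜)
    {φ₀ x y : EuclideanSpace 𝕜 ι} (hφ₀ : ‖φ₀‖ = 1)
    (hx : U *ᵥ (fun p => x p.1 * φ₀ p.2) = fun p => x p.1 * x p.2)
    (hy : U *ᵥ (fun p => y p.1 * φ₀ p.2) = fun p => y p.1 * y p.2) :
    inner 𝕜 x y ^ 2 = inner 𝕜 x y := by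
  have h := star_mulVec_dotProduct_mulVec_of_mem_unitaryGroup hU
    (fun p => x p.1 * φ₀ p.2) (fun p => y p.1 * φ₀ p.2)
  rw [hx, hy, star_prod_dotProduct_prod, star_prod_dotProduct_prod] at h
  simpa [EuclideanSpace.star_dotProduct, inner_self_eq_norm_sq_to_K, hφ₀, sq] using h

variable {E : Type*} [NormedAddCommGroup E] [InnerProductSpace 𝕜 E]

-- The 3-4-5 triangle gives an inner product other than `0` and `1` without square roots.
theorem Orthonormal.exists_norm_eq_one_inner_eq_three_fifths {ι : Type*} {f : ι → E}
    (hf : Orthonormal 𝕜 f) {i j : ι} (hij : i ≠ j) :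
    ∃ w : E, ‖w‖ = 1 ∧ inner 𝕜 (f i) w = 3 / 5 := by
  refine ⟨(3 / 5 : 𝕜) • f i + (4 / 5 : 𝕜) • f j, ?_, ?_⟩
  · have horth : inner 𝕜 ((3 / 5 : 𝕜) • f i) ((4 / 5 : 𝕜) • f j) = 0 := by
      simp [inner_smul_left, inner_smul_right, hf.inner_eq_zero hij]
    have h := norm_add_sq_eq_norm_sq_add_norm_sq_of_inner_eq_zero _ _ horth
    rw [norm_smul, norm_smul, hf.1 i, hf.1 j] at h
    refine (pow_eq_one_iff_of_nonneg (norm_nonneg _) two_ne_zero).mp ?_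
    rw [sq, h]
    norm_num
  · simp [inner_add_right, inner_smul_right, hf.inner_eq_zero hij,
      inner_self_eq_norm_sq_to_K, hf.1 i]

theorem no_cloning {n : ℕ} (hn : 2 ≤ n)
    (φ₀ : EuclideanSpace ℂ (Fin n)) (hφ₀ : ‖φ₀‖ = 1) :
    ¬ ∃ U ∈ Matrix.unitaryGroup (Fin n × Fin n) ℂ,
        ∀ ψ : EuclideanSpace ℂ (Fin n), ‖ψ‖ = 1 →
          (U : Matrix (Fin n × Fin n) (Fin n × Fin n) ℂ).mulVec
              (fun p => ψ p.1 * φ₀ p.2)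
            = fun p => ψ p.1 * ψ p.2 := by
  rintro ⟨U, hU, hclone⟩
  have hsingle := EuclideanSpace.orthonormal_single (𝕜 := ℂ) (ι := Fin n)
  have h01 : (⟨0, by omega⟩ : Fin n) ≠ ⟨1, by omega⟩ := by simp
  obtain ⟨w, hw, hinner⟩ := hsingle.exists_norm_eq_one_inner_eq_three_fifths h01
  have h := inner_sq_eq_inner_of_mulVec_clone hU hφ₀
    (hclone _ (hsingle.1 ⟨0, by omega⟩)) (hclone w hw)
  rw [hinner] at h
  norm_num at h
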